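/- arXiv:0907.3207 — 2 statements merged into one kernel-verified Lean document; each statement's English description precedes it below -/
import Mathlib

section
/- Let (Ω,𝔉,P) be a probability space and for each ε ∈ (0,1] let X_ε : Ω → C([0,1],ℝ^d) be Borel measurable. Suppose that for every open set U ⊆ C([0,1],ℝ^d) one has liminf_{ε→0⁺} ε·log P(X_ε ∈ U) ≥ −inf_{g∈U} I₀(g). Then for every open set G ⊆ C([0,1],ℝ^d), liminf_{ε→0⁺} ε·log P(Φ∘X_ε ∈ G) ≥ −inf_{g∈G} I(g). -/
open MeasureTheory Filter Topology
open scoped ENNReal NNReal Classical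

noncomputable section

variable {d : ℕ}

/-- The hitting-time functional: `τ(f) = min(inf {t ∈ [0,1] : f t ∈ B}, 1)`,
with the convention `inf ∅ = +∞` (realized by adjoining `1` to the set). -/
def hitTime (B : Set (EuclideanSpace ℝ (Fin d)))
    (f : C(unitInterval, EuclideanSpace ℝ (Fin d))) : ℝ :=
  sInf ({t : ℝ | ∃ ht : t ∈ Set.Icc (0 : ℝ) 1, f ⟨t, ht⟩ ∈ B} ∪ {1})

/-- The stopping map `Φ(f)(t) = f(min(t, τ(f)))`. -/
def stopMap (B : Set (EuclideanSpace ℝ (Fin d)))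
    (f : C(unitInterval, EuclideanSpace ℝ (Fin d))) :
    C(unitInterval, EuclideanSpace ℝ (Fin d)) :=
  ⟨fun t => f (Set.projIcc (0 : ℝ) 1 zero_le_one (min t.1 (hitTime B f))),
    f.continuous.comp (continuous_projIcc.comp
      (continuous_subtype_val.min continuous_const))⟩

/-- `g` is absolutely continuous with (a.e.) derivative `g'` lying in `L²([0,1])`. -/
def HasL2Deriv (g : C(unitInterval, EuclideanSpace ℝ (Fin d)))
    (g' : ℝ → EuclideanSpace ℝ (Fin d)) : Prop :=
  MemLp g' 2 (volume.restrict (Set.Icc (0 : ℝ) 1)) ∧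
    ∀ t : unitInterval, g t = g 0 + ∫ s in (0 : ℝ)..(t : ℝ), g' s

/-- The Schilder rate function `I₀`: `(1/2)∫₀¹ ‖g'‖²` if `g(0) = u` and `g` is absolutely
continuous with square-integrable derivative, and `+∞` otherwise. -/
def rate0 (u : EuclideanSpace ℝ (Fin d))
    (g : C(unitInterval, EuclideanSpace ℝ (Fin d))) : ℝ≥0∞ :=
  sInf {c : ℝ≥0∞ | ∃ g' : ℝ → EuclideanSpace ℝ (Fin d), HasL2Deriv g g' ∧ g 0 = u ∧
    c = ENNReal.ofReal ((1 / 2) * ∫ s in Set.Icc (0 : ℝ) 1, ‖g' s‖ ^ 2)}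

/-- The rate function `I`: equal to `I₀` on the range of the stopping map `Φ`,
and `+∞` elsewhere. -/
def rateStopped (B : Set (EuclideanSpace ℝ (Fin d))) (u : EuclideanSpace ℝ (Fin d))
    (g : C(unitInterval, EuclideanSpace ℝ (Fin d))) : ℝ≥0∞ :=
  if g ∈ Set.range (stopMap B) then rate0 u g else ⊤

instance : MeasurableSpace C(unitInterval, EuclideanSpace ℝ (Fin d)) := borel _
instance : BorelSpace C(unitInterval, EuclideanSpace ℝ (Fin d)) := ⟨rfl⟩

/-!
The stopping map is continuous at every point of its range, and fixes it. Indeed, if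
`g = Φ f` stops at `τ = τ(f)`, then `g` avoids the closed set `B` on `[0, τ)`, so by
compactness every `h` near `g` avoids `B` up to `τ - θ`; thus `Φ h` stops within `θ` of `τ`
or later, where `g` is frozen, and uniform continuity of `f` makes `Φ h` close to `g`. Hence
every `g ∈ G ∩ range Φ` lies in the open set `U = interior (Φ⁻¹ G)`, so `inf_U I₀ ≤ inf_G I`,
and the lower bound for `Φ ∘ X_ε` on `G` follows from the lower bound for `X_ε` on
`U ⊆ Φ⁻¹ G`.
-/

namespace StoppedLDP

variable {B : Set (EuclideanSpace ℝ (Fin d))}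

def hitTimes (B : Set (EuclideanSpace ℝ (Fin d)))
    (f : C(unitInterval, EuclideanSpace ℝ (Fin d))) : Set ℝ :=
  {t : ℝ | ∃ ht : t ∈ Set.Icc (0 : ℝ) 1, f ⟨t, ht⟩ ∈ B} ∪ {1}

lemma hitTime_eq_sInf (B : Set (EuclideanSpace ℝ (Fin d)))
    (f : C(unitInterval, EuclideanSpace ℝ (Fin d))) : hitTime B f = sInf (hitTimes B f) :=
  rfl

lemma hitTimes_subset_Icc (f : C(unitInterval, EuclideanSpace ℝ (Fin d))) :
    hitTimes B f ⊆ Set.Icc 0 1 := by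
  rintro t (⟨ht, -⟩ | rfl)
  · exact ht
  · exact ⟨zero_le_one, le_rfl⟩

lemma bddBelow_hitTimes (f : C(unitInterval, EuclideanSpace ℝ (Fin d))) :
    BddBelow (hitTimes B f) :=
  ⟨0, fun _ ht => (hitTimes_subset_Icc f ht).1⟩

lemma isClosed_hitTimes (hB : IsClosed B) (f : C(unitInterval, EuclideanSpace ℝ (Fin d))) :
    IsClosed (hitTimes B f) := by
  have himage : {t : ℝ | ∃ ht : t ∈ Set.Icc (0 : ℝ) 1, f ⟨t, ht⟩ ∈ B} =
      Subtype.val '' (f ⁻¹' B) := by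
    ext t
    constructor
    · rintro ⟨ht, hB⟩
      exact ⟨⟨t, ht⟩, hB, rfl⟩
    · rintro ⟨s, hs, rfl⟩
      exact ⟨s.2, hs⟩
  rw [hitTimes, himage]
  exact ((hB.preimage f.continuous).isCompact.image continuous_subtype_val).isClosed.union
    isClosed_singleton

lemma hitTime_mem_Icc (f : C(unitInterval, EuclideanSpace ℝ (Fin d))) :
    hitTime B f ∈ Set.Icc (0 : ℝ) 1 :=
  ⟨le_csInf ⟨1, Or.inr rfl⟩ fun _ ht => (hitTimes_subset_Icc f ht).1,
    csInf_le (bddBelow_hitTimes f) (Or.inr rfl)⟩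

lemma apply_notMem_of_lt_hitTime {f : C(unitInterval, EuclideanSpace ℝ (Fin d))}
    {t : unitInterval} (ht : (t : ℝ) < hitTime B f) : f t ∉ B := fun hft =>
  (csInf_le (bddBelow_hitTimes f) (Or.inl ⟨t.2, hft⟩)).not_gt ht

lemma lt_hitTime_of_forall_notMem (hB : IsClosed B)
    {f : C(unitInterval, EuclideanSpace ℝ (Fin d))} {a : ℝ} (ha : a < 1)
    (hf : ∀ t : unitInterval, (t : ℝ) ≤ a → f t ∉ B) : a < hitTime B f := by
  rcases (isClosed_hitTimes hB f).csInf_mem ⟨1, Or.inr rfl⟩ (bddBelow_hitTimes f) with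
    ⟨hτ, hfτ⟩ | hτ
  · exact not_le.1 fun hle => hf _ hle hfτ
  · rw [hitTime_eq_sInf, hτ]
    exact ha

lemma lowerSemicontinuous_hitTime (hB : IsClosed B) : LowerSemicontinuous (hitTime B) := by
  intro f a ha
  let K : Set unitInterval := {t | (t : ℝ) ≤ a}
  have hK : IsCompact K := (isClosed_le continuous_subtype_val continuous_const).isCompact
  have hfK : Set.MapsTo f K Bᶜ := fun t ht => apply_notMem_of_lt_hitTime (lt_of_le_of_lt ht ha)
  filter_upwards [ContinuousMap.eventually_mapsTo hK hB.isOpen_compl hfK] with h hh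
  exact lt_hitTime_of_forall_notMem hB (ha.trans_le (hitTime_mem_Icc f).2) fun t ht => hh ht

lemma stopMap_apply (B : Set (EuclideanSpace ℝ (Fin d)))
    (f : C(unitInterval, EuclideanSpace ℝ (Fin d))) (t : unitInterval) :
    stopMap B f t = f (Set.projIcc 0 1 zero_le_one (min (t : ℝ) (hitTime B f))) :=
  rfl

lemma stopMap_apply_of_le_hitTime (f : C(unitInterval, EuclideanSpace ℝ (Fin d)))
    {t : unitInterval} (ht : (t : ℝ) ≤ hitTime B f) : stopMap B f t = f t := by
  rw [stopMap_apply, min_eq_left ht, Set.projIcc_val]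

lemma hitTime_le_hitTime_stopMap (f : C(unitInterval, EuclideanSpace ℝ (Fin d))) :
    hitTime B f ≤ hitTime B (stopMap B f) := by
  refine le_csInf ⟨1, Or.inr rfl⟩ ?_
  rintro t (⟨ht, hB⟩ | rfl)
  · by_contra! hlt
    rw [stopMap_apply_of_le_hitTime f hlt.le] at hB
    exact apply_notMem_of_lt_hitTime hlt hB
  · exact (hitTime_mem_Icc f).2

lemma abs_min_min_sub_min_le {t τ τ' θ : ℝ} (hθ : 0 ≤ θ) (hτ' : τ - θ < τ') :
    |min (min t τ') τ - min t τ| ≤ θ := by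
  rw [abs_le]
  constructor <;> simp only [min_def] <;> split_ifs <;> linarith

theorem tendsto_stopMap_nhds_stopMap (hB : IsClosed B)
    (f : C(unitInterval, EuclideanSpace ℝ (Fin d))) :
    Tendsto (stopMap B) (𝓝 (stopMap B f)) (𝓝 (stopMap B f)) := by
  rw [Metric.tendsto_nhds]
  intro δ hδ
  obtain ⟨η, hη, hfη⟩ := Metric.uniformContinuous_iff.1
    (CompactSpace.uniformContinuous_of_continuous f.continuous) (δ / 2) (half_pos hδ)
  have hτ : ∀ᶠ h in 𝓝 (stopMap B f), hitTime B f - η / 2 < hitTime B h :=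
    lowerSemicontinuous_hitTime hB _ _
      (by linarith [hitTime_le_hitTime_stopMap (B := B) f])
  filter_upwards [hτ, Metric.ball_mem_nhds _ (half_pos hδ)] with h hτh hh
  refine (ContinuousMap.dist_lt_iff hδ).2 fun t => ?_
  set m := Set.projIcc (0 : ℝ) 1 zero_le_one (min (t : ℝ) (hitTime B h))
  have hm : (m : ℝ) = min (t : ℝ) (hitTime B h) := congrArg Subtype.val <|
    Set.projIcc_of_mem _ ⟨le_min t.2.1 (hitTime_mem_Icc h).1, (min_le_left _ _).trans t.2.2⟩
  have hstop : dist (stopMap B f m) (stopMap B f t) < δ / 2 := by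
    refine hfη (lt_of_le_of_lt ?_ (half_lt_self hη))
    rw [Subtype.dist_eq, Real.dist_eq, hm]
    exact (Set.abs_projIcc_sub_projIcc _).trans (abs_min_min_sub_min_le (half_pos hη).le hτh)
  calc dist (stopMap B h t) (stopMap B f t)
      ≤ dist (h m) (stopMap B f m) + dist (stopMap B f m) (stopMap B f t) := dist_triangle _ _ _
    _ < δ / 2 + δ / 2 := add_lt_add_of_le_of_lt
        ((ContinuousMap.dist_apply_le_dist m).trans (Metric.mem_ball.1 hh).le) hstop
    _ = δ := add_halves δ

lemma inter_range_stopMap_subset_interior_preimage (hB : IsClosed B)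
    {G : Set C(unitInterval, EuclideanSpace ℝ (Fin d))} (hG : IsOpen G) :
    G ∩ Set.range (stopMap B) ⊆ interior (stopMap B ⁻¹' G) := by
  rintro _ ⟨hfG, f, rfl⟩
  exact mem_interior_iff_mem_nhds.2 (tendsto_stopMap_nhds_stopMap hB f (hG.mem_nhds hfG))

lemma iInf_rate0_interior_preimage_le (hB : IsClosed B) (u : EuclideanSpace ℝ (Fin d))
    {G : Set C(unitInterval, EuclideanSpace ℝ (Fin d))} (hG : IsOpen G) :
    ⨅ g ∈ interior (stopMap B ⁻¹' G), rate0 u g ≤ ⨅ g ∈ G, rateStopped B u g := by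
  refine le_iInf₂ fun g hgG => ?_
  unfold rateStopped
  split_ifs with hg
  · exact iInf₂_le g (inter_range_stopMap_subset_interior_preimage hB hG ⟨hgG, hg⟩)
  · exact le_top

end StoppedLDP

lemma liminf_mul_log_measure_mono {Ω : Type*} [MeasurableSpace Ω] (μ : Measure Ω)
    {A A' : ℝ → Set Ω} (h : ∀ ε, A ε ⊆ A' ε) :
    liminf (fun ε : ℝ => (ε : EReal) * ENNReal.log (μ (A ε))) (𝓝[>] 0) ≤
      liminf (fun ε : ℝ => (ε : EReal) * ENNReal.log (μ (A' ε))) (𝓝[>] 0) :=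
  liminf_le_liminf <| eventually_nhdsWithin_of_forall fun ε hε =>
    mul_le_mul_of_nonneg_left (ENNReal.log_monotone (measure_mono (h ε)))
      (EReal.coe_nonneg.2 (le_of_lt hε))

theorem stopped_LDP_lower_bound_general
    {Ω : Type*} [MeasurableSpace Ω] (P : Measure Ω)
    (B : Set (EuclideanSpace ℝ (Fin d))) (hB : IsClosed B)
    (u : EuclideanSpace ℝ (Fin d))
    (X : ℝ → Ω → C(unitInterval, EuclideanSpace ℝ (Fin d)))
    (hlower : ∀ U : Set C(unitInterval, EuclideanSpace ℝ (Fin d)), IsOpen U →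
      -((⨅ g ∈ U, rate0 u g : ℝ≥0∞) : EReal) ≤
        liminf (fun ε : ℝ => (ε : EReal) * ENNReal.log (P {ω | X ε ω ∈ U}))
          (𝓝[>] (0 : ℝ))) :
    ∀ G : Set C(unitInterval, EuclideanSpace ℝ (Fin d)), IsOpen G →
      -((⨅ g ∈ G, rateStopped B u g : ℝ≥0∞) : EReal) ≤
        liminf (fun ε : ℝ => (ε : EReal) * ENNReal.log (P {ω | stopMap B (X ε ω) ∈ G}))
          (𝓝[>] (0 : ℝ)) := by
  intro G hG
  calc -((⨅ g ∈ G, rateStopped B u g : ℝ≥0∞) : EReal)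
      ≤ -((⨅ g ∈ interior (stopMap B ⁻¹' G), rate0 u g : ℝ≥0∞) : EReal) :=
        EReal.neg_le_neg_iff.2 (EReal.coe_ennreal_le_coe_ennreal_iff.2
          (StoppedLDP.iInf_rate0_interior_preimage_le hB u hG))
    _ ≤ _ := hlower _ isOpen_interior
    _ ≤ _ := liminf_mul_log_measure_mono P fun _ _ hω =>
        interior_subset (s := stopMap B ⁻¹' G) hω

/-- **LDP lower bound for the stopped process.** If the family `X_ε` satisfies the
large deviation lower bound with rate `I₀`, then `Φ ∘ X_ε` satisfies the lower
bound with rate `I`. -/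
theorem stopped_LDP_lower_bound
    {Ω : Type*} [MeasurableSpace Ω] (P : Measure Ω) [IsProbabilityMeasure P]
    (B : Set (EuclideanSpace ℝ (Fin d))) (hB : IsClosed B)
    (u : EuclideanSpace ℝ (Fin d)) (hd : 1 ≤ d)
    (X : ℝ → Ω → C(unitInterval, EuclideanSpace ℝ (Fin d)))
    (hX : ∀ ε ∈ Set.Ioc (0 : ℝ) 1, Measurable (X ε))
    (hlower : ∀ U : Set C(unitInterval, EuclideanSpace ℝ (Fin d)), IsOpen U →
      -((⨅ g ∈ U, rate0 u g : ℝ≥0∞) : EReal) ≤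
        liminf (fun ε : ℝ => (ε : EReal) * ENNReal.log (P {ω | X ε ω ∈ U}))
          (𝓝[>] (0 : ℝ))) :
    ∀ G : Set C(unitInterval, EuclideanSpace ℝ (Fin d)), IsOpen G →
      -((⨅ g ∈ G, rateStopped B u g : ℝ≥0∞) : EReal) ≤
        liminf (fun ε : ℝ => (ε : EReal) * ENNReal.log (P {ω | stopMap B (X ε ω) ∈ G}))
          (𝓝[>] (0 : ℝ)) :=
  stopped_LDP_lower_bound_general P B hB u X hlower
end
end

section
/- For every open set G ⊆ C([0,1],ℝ^d), inf_{g∈G} I(g) = inf_{g ∈ interior(Φ⁻¹(G))} I₀(g); in particular, if interior(Φ⁻¹(G)) = ∅ then I(g) = +∞ for every g ∈ G. -/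
open MeasureTheory Filter Topology
open scoped ENNReal NNReal Classical

noncomputable section

variable {d : ℕ}

/-!
When `B` is closed the hitting time is lower semicontinuous: if `f` avoids `B` on `[0, s]`, so
does every path uniformly close to `f`, since `[0, s]` is compact. Hence `Φ` is continuous at each
of its values `g = Φ(f)`: for `k` near `g`, `Φ(k)` is uniformly close to `g` stopped at
`τ(k) ∧ τ(f)`, and this time tends to `τ(f)`. So every `g ∈ G ∩ range Φ`, where `I(g) = I₀(g)`,
lies in the interior of `Φ⁻¹(G)`. Conversely, stopping a path only cuts off its derivative after
the stopping time, so `I₀(Φ(h)) ≤ I₀(h)`.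
-/

section StopAt

variable {E : Type*} [TopologicalSpace E]

def stopAt (f : C(unitInterval, E)) (s : ℝ) : C(unitInterval, E) :=
  ⟨fun t => f (Set.projIcc 0 1 zero_le_one (min t.1 s)),
    f.continuous.comp (continuous_projIcc.comp (continuous_subtype_val.min continuous_const))⟩

lemma stopAt_apply (f : C(unitInterval, E)) (s : ℝ) (t : unitInterval) :
    stopAt f s t = f (Set.projIcc 0 1 zero_le_one (min t.1 s)) := rfl

lemma stopAt_zero (f : C(unitInterval, E)) {s : ℝ} (hs : 0 ≤ s) : stopAt f s 0 = f 0 := by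
  show f (Set.projIcc 0 1 zero_le_one (min 0 s)) = f 0
  rw [min_eq_left hs, Set.projIcc_left]
  rfl

lemma stopAt_stopAt (f : C(unitInterval, E)) (s τ : ℝ) :
    stopAt (stopAt f τ) s = stopAt f (min s τ) := by
  ext t
  simp only [stopAt_apply]
  congr 1
  rcases le_total 0 s with hs | hs
  · rw [Set.projIcc_of_mem _ ⟨le_min t.2.1 hs, (min_le_left _ _).trans t.2.2⟩, min_assoc]
  · have hts : min t.1 s ≤ 0 := (min_le_right _ _).trans hs
    rw [Set.projIcc_of_le_left _ hts, Set.projIcc_of_le_left _ (min_le_left _ _),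
      Set.projIcc_of_le_left _ (min_assoc t.1 s τ ▸ (min_le_left _ _).trans hts)]

lemma continuous_stopAt (f : C(unitInterval, E)) : Continuous (stopAt f) := by
  apply ContinuousMap.continuous_of_continuous_uncurry
  exact f.continuous.comp <| continuous_projIcc.comp <|
    (continuous_subtype_val.comp continuous_snd).min continuous_fst

end StopAt

lemma dist_stopAt_le {E : Type*} [PseudoMetricSpace E] (f g : C(unitInterval, E)) (s : ℝ) :
    dist (stopAt f s) (stopAt g s) ≤ dist f g :=
  (ContinuousMap.dist_le dist_nonneg).2 fun t => by
    simp only [stopAt_apply]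
    exact ContinuousMap.dist_apply_le_dist _

lemma intervalIntegral_indicator_Iic {E : Type*} [NormedAddCommGroup E] [NormedSpace ℝ E]
    (g : ℝ → E) {t τ : ℝ} (ht : 0 ≤ t) (hτ : 0 ≤ τ) :
    ∫ s in (0 : ℝ)..t, (Set.Iic τ).indicator g s = ∫ s in (0 : ℝ)..min t τ, g s := by
  rw [intervalIntegral.integral_of_le ht, intervalIntegral.integral_of_le (le_min ht hτ),
    setIntegral_indicator measurableSet_Iic, Set.Ioc_inter_Iic]

lemma HasL2Deriv.stopAt {g : C(unitInterval, EuclideanSpace ℝ (Fin d))}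
    {g' : ℝ → EuclideanSpace ℝ (Fin d)} (hg : HasL2Deriv g g') {τ : ℝ} (hτ : 0 ≤ τ) :
    HasL2Deriv (stopAt g τ) ((Set.Iic τ).indicator g') := by
  refine ⟨hg.1.indicator measurableSet_Iic, fun t => ?_⟩
  have hmem : min (t : ℝ) τ ∈ Set.Icc (0 : ℝ) 1 := ⟨le_min t.2.1 hτ, (min_le_left _ _).trans t.2.2⟩
  rw [stopAt_zero g hτ, intervalIntegral_indicator_Iic g' t.2.1 hτ, stopAt_apply,
    hg.2 (Set.projIcc 0 1 zero_le_one _), Set.projIcc_of_mem _ hmem]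

lemma rate0_stopAt_le (u : EuclideanSpace ℝ (Fin d)) (g : C(unitInterval, EuclideanSpace ℝ (Fin d)))
    {τ : ℝ} (hτ : 0 ≤ τ) : rate0 u (stopAt g τ) ≤ rate0 u g := by
  refine le_sInf ?_
  rintro _ ⟨g', hg, hg0, rfl⟩
  refine sInf_le_of_le ⟨_, hg.stopAt hτ, (stopAt_zero g hτ).trans hg0, rfl⟩ ?_
  have henergy : ∫ s in Set.Icc (0 : ℝ) 1, ‖(Set.Iic τ).indicator g' s‖ ^ 2
      ≤ ∫ s in Set.Icc (0 : ℝ) 1, ‖g' s‖ ^ 2 :=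
    integral_mono_of_nonneg (Eventually.of_forall fun _ => by positivity)
      (hg.1.integrable_norm_pow two_ne_zero)
      (Eventually.of_forall fun s =>
        pow_le_pow_left₀ (norm_nonneg _) (norm_indicator_le_norm_self _ _) 2)
  exact ENNReal.ofReal_le_ofReal (by linarith)

section HitTime

variable {B : Set (EuclideanSpace ℝ (Fin d))}

lemma bddBelow_hitSet (f : C(unitInterval, EuclideanSpace ℝ (Fin d))) :
    BddBelow ({t : ℝ | ∃ ht : t ∈ Set.Icc (0 : ℝ) 1, f ⟨t, ht⟩ ∈ B} ∪ {1}) :=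
  ⟨0, by rintro t (⟨ht, -⟩ | rfl) <;> [exact ht.1; exact zero_le_one]⟩

lemma le_hitTime {f : C(unitInterval, EuclideanSpace ℝ (Fin d))} {s : ℝ} (hs : s ≤ 1)
    (h : ∀ t : unitInterval, (t : ℝ) < s → f t ∉ B) : s ≤ hitTime B f := by
  refine le_csInf ⟨1, Or.inr rfl⟩ ?_
  rintro t (⟨ht, htB⟩ | rfl)
  · exact not_lt.1 fun hts => h ⟨t, ht⟩ hts htB
  · exact hs

lemma hitTime_nonneg (f : C(unitInterval, EuclideanSpace ℝ (Fin d))) : 0 ≤ hitTime B f :=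
  le_hitTime zero_le_one fun t ht => absurd t.2.1 (not_le.2 ht)

lemma hitTime_le_one (f : C(unitInterval, EuclideanSpace ℝ (Fin d))) : hitTime B f ≤ 1 :=
  csInf_le (bddBelow_hitSet f) (Or.inr rfl)

lemma notMem_of_lt_hitTime {f : C(unitInterval, EuclideanSpace ℝ (Fin d))} {t : unitInterval}
    (ht : (t : ℝ) < hitTime B f) : f t ∉ B := fun htB =>
  (csInf_le (bddBelow_hitSet f) (Or.inl ⟨t.2, htB⟩)).not_gt ht

lemma lowerSemicontinuous_hitTime (hB : IsClosed B) : LowerSemicontinuous (hitTime B) := by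
  intro f y hy
  obtain ⟨s, hys, hsτ⟩ := exists_between hy
  have hK : IsCompact {t : unitInterval | (t : ℝ) ≤ s} :=
    (isClosed_le continuous_subtype_val continuous_const).isCompact
  filter_upwards [ContinuousMap.eventually_mapsTo hK hB.isOpen_compl
    fun t ht => notMem_of_lt_hitTime (lt_of_le_of_lt ht hsτ)] with k hk
  exact hys.trans_le (le_hitTime (hsτ.le.trans (hitTime_le_one f)) fun t ht => hk ht.le)

lemma stopMap_eq_stopAt (f : C(unitInterval, EuclideanSpace ℝ (Fin d))) :
    stopMap B f = stopAt f (hitTime B f) := rfl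

lemma hitTime_le_hitTime_stopMap (f : C(unitInterval, EuclideanSpace ℝ (Fin d))) :
    hitTime B f ≤ hitTime B (stopMap B f) := by
  refine le_hitTime (hitTime_le_one f) fun t ht => ?_
  rw [stopMap_eq_stopAt, stopAt_apply, min_eq_left ht.le, Set.projIcc_val]
  exact notMem_of_lt_hitTime ht

theorem tendsto_stopMap_nhds_stopMap (hB : IsClosed B)
    (f : C(unitInterval, EuclideanSpace ℝ (Fin d))) :
    Tendsto (stopMap B) (𝓝 (stopMap B f)) (𝓝 (stopMap B f)) := by
  set g := stopMap B f
  set τ := hitTime B f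
  have hmin : Tendsto (fun k => min (hitTime B k) τ) (𝓝 g) (𝓝 τ) := by
    refine tendsto_order.2 ⟨fun a ha => ?_,
      fun a ha => Eventually.of_forall fun _ => (min_le_right _ _).trans_lt ha⟩
    filter_upwards [lowerSemicontinuous_hitTime hB g a
      (ha.trans_le (hitTime_le_hitTime_stopMap f))] with k hk using lt_min hk ha
  have hstop : Tendsto (fun k => stopAt g (hitTime B k)) (𝓝 g) (𝓝 g) := by
    simpa only [g, τ, stopMap_eq_stopAt, stopAt_stopAt, Function.comp_def] using
      ((continuous_stopAt f).tendsto τ).comp hmin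
  have hbound : Tendsto (fun k => dist k g + dist (stopAt g (hitTime B k)) g) (𝓝 g) (𝓝 0) := by
    simpa using (tendsto_id.dist (tendsto_const_nhds (x := g))).add
      (hstop.dist (tendsto_const_nhds (x := g)))
  refine tendsto_iff_dist_tendsto_zero.2 (squeeze_zero (fun _ => dist_nonneg) (fun k => ?_) hbound)
  calc dist (stopMap B k) g
      ≤ dist (stopAt k (hitTime B k)) (stopAt g (hitTime B k)) + dist (stopAt g (hitTime B k)) g :=
        dist_triangle _ _ _
    _ ≤ dist k g + dist (stopAt g (hitTime B k)) g := by gcongr; exact dist_stopAt_le _ _ _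

lemma stopMap_mem_interior_preimage (hB : IsClosed B)
    {G : Set C(unitInterval, EuclideanSpace ℝ (Fin d))} (hG : IsOpen G)
    {f : C(unitInterval, EuclideanSpace ℝ (Fin d))} (hf : stopMap B f ∈ G) :
    stopMap B f ∈ interior (stopMap B ⁻¹' G) :=
  mem_interior_iff_mem_nhds.2 (tendsto_stopMap_nhds_stopMap hB f (hG.mem_nhds hf))

end HitTime

theorem rate_inf_open_general (B : Set (EuclideanSpace ℝ (Fin d))) (hB : IsClosed B)
    (u : EuclideanSpace ℝ (Fin d))
    (G : Set C(unitInterval, EuclideanSpace ℝ (Fin d))) (hG : IsOpen G) :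
    ((⨅ g ∈ G, rateStopped B u g) = (⨅ g ∈ interior (stopMap B ⁻¹' G), rate0 u g)) ∧
      (interior (stopMap B ⁻¹' G) = ∅ → ∀ g ∈ G, rateStopped B u g = ⊤) := by
  have key : (⨅ g ∈ G, rateStopped B u g) = ⨅ g ∈ interior (stopMap B ⁻¹' G), rate0 u g := by
    refine le_antisymm (le_iInf₂ fun h hh => ?_) (le_iInf₂ fun g hg => ?_)
    · calc ⨅ g ∈ G, rateStopped B u g
          ≤ rateStopped B u (stopMap B h) := biInf_le _ (Set.mem_preimage.1 (interior_subset hh))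
        _ = rate0 u (stopMap B h) := if_pos (Set.mem_range_self h)
        _ ≤ rate0 u h := rate0_stopAt_le u h (hitTime_nonneg h)
    · by_cases hr : g ∈ Set.range (stopMap B)
      · obtain ⟨f, rfl⟩ := hr
        rw [rateStopped, if_pos (Set.mem_range_self f)]
        exact biInf_le _ (stopMap_mem_interior_preimage hB hG hg)
      · rw [rateStopped, if_neg hr]
        exact le_top
  refine ⟨key, fun hempty g hg => top_unique ?_⟩
  calc ⊤ = ⨅ g ∈ G, rateStopped B u g := by rw [key, hempty]; simp
    _ ≤ rateStopped B u g := biInf_le _ hg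

/-- For every open set `G`, the infimum of the rate function `I` over `G` equals the
infimum of `I₀` over the interior of `Φ⁻¹(G)`; in particular, if this interior is
empty, then `I = +∞` on all of `G`. -/
theorem rate_inf_open (B : Set (EuclideanSpace ℝ (Fin d))) (hB : IsClosed B)
    (u : EuclideanSpace ℝ (Fin d)) (hd : 1 ≤ d)
    (G : Set C(unitInterval, EuclideanSpace ℝ (Fin d))) (hG : IsOpen G) :
    ((⨅ g ∈ G, rateStopped B u g) = (⨅ g ∈ interior (stopMap B ⁻¹' G), rate0 u g)) ∧
      (interior (stopMap B ⁻¹' G) = ∅ → ∀ g ∈ G, rateStopped B u g = ⊤) :=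
  rate_inf_open_general B hB u G hG

end
end
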